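/- Saddle Point conditional gradient identifies the most violated constraint of A_k (Proposition, Section 5.2): Fix (x, x_out, z) ∈ ℝ^n × ℝ^m × ℝ^m with 0 ≤ z[i] ≤ 1 for all i, set x̂ = Wx + b, and suppose the pre-activation bounds l̂, û ∈ ℝ^m satisfy M⁻[i] ≤ l̂[i] and û[i] ≤ M⁺[i] for all i, where M⁻[i] = Σ_j W[i,j]Ľ[i,j] + b[i] and M⁺[i] = Σ_j W[i,j]Ǔ[i,j] + b[i]. Define the Big-M violations v_i⁰ = x_out[i] − û[i]z[i] and v_i¹ = x_out[i] − x̂[i] + l̂[i](1 − z[i]), and let I* be the mask with I*[i,j] = 1 iff ((1 − z[i])Ľ[i,j] + z[i]Ǔ[i,j] − x[j])·W[i,j] ≥ 0. Then for every neuron i: (a) v_i(I) ≤ v_i(I*) for every mask I ∈ {0,1}^{m×n}; (b) if 0_i and 1_i denote the all-zero and all-one rows, then v_i(0) ≤ v_i⁰ and v_i(1) ≤ v_i¹; consequently max(v_i(I*), v_i⁰, v_i¹) equals the maximum violation over all upper-bounding constraints of the set A_k at neuron i, namely the supremum of v_i(I) over masks I whose i-th row is neither all-zero nor all-one, together with v_i⁰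 and v_i¹. -/

import Mathlib

/-!
For fixed `(x, x_out, z)` the violation `v_i(I)` is affine in the `i`-th row of the mask, the
entry `I[i,j]` having coefficient `((1 - z_i) Ľ[i,j] + z_i Ǔ[i,j] - x_j) W[i,j]`. Over masks with
entries in `[0,1]` it is therefore maximised by switching on exactly the entries with nonnegative
coefficient, which is `I*`. The degenerate rows give `v_i(0) = x_out_i - z_i M⁺_i` and
`v_i(1) = x_out_i - x̂_i + (1 - z_i) M⁻_i`, which `û ≤ M⁺` and `M⁻ ≤ l̂` bound by the Big-M
violations. So if the `i`-th row of `I*` is degenerate, `v_i(I*)` is dominated by `v_i⁰` or `v_i¹`;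
otherwise `I*` itself indexes a constraint of `A_k`.
-/

open Finset

/-- `Ľ[i,j]`: lower corner of the box assigned according to the sign of `W[i,j]`. -/
noncomputable def cLmat {m n : ℕ} (W : Fin m → Fin n → ℝ) (l u : Fin n → ℝ)
    (i : Fin m) (j : Fin n) : ℝ :=
  if 0 ≤ W i j then l j else u j

/-- `Ǔ[i,j]`: upper corner of the box assigned according to the sign of `W[i,j]`. -/
noncomputable def cUmat {m n : ℕ} (W : Fin m → Fin n → ℝ) (l u : Fin n → ℝ)
    (i : Fin m) (j : Fin n) : ℝ :=
  if 0 ≤ W i j then u j else l j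

/-- Right-hand side of the Anderson constraint for neuron `i` with mask `I`. -/
noncomputable def andersonRHS {m n : ℕ} (W : Fin m → Fin n → ℝ) (b : Fin m → ℝ)
    (l u : Fin n → ℝ) (I : Fin m → Fin n → ℝ)
    (x : Fin n → ℝ) (z : Fin m → ℝ) (i : Fin m) : ℝ :=
  (∑ j, W i j * I i j * x j) + z i * b i
    - (∑ j, W i j * I i j * cLmat W l u i j) * (1 - z i)
    + (∑ j, W i j * (1 - I i j) * cUmat W l u i j) * z i

/-- Violation of the Anderson constraint for neuron `i` with mask `I`. -/
noncomputable def violation {m n : ℕ} (W : Fin m → Fin n → ℝ) (b : Fin m → ℝ)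
    (l u : Fin n → ℝ) (I : Fin m → Fin n → ℝ)
    (x : Fin n → ℝ) (xout z : Fin m → ℝ) (i : Fin m) : ℝ :=
  xout i - andersonRHS W b l u I x z i

theorem mul_le_ite_nonneg_mul {t c : ℝ} (ht₀ : 0 ≤ t) (ht₁ : t ≤ 1) :
    t * c ≤ (if 0 ≤ c then 1 else 0) * c := by
  split_ifs with hc
  · simpa using mul_le_of_le_one_left hc ht₁
  · simpa using mul_nonpos_of_nonneg_of_nonpos ht₀ (le_of_not_ge hc)

theorem IsGreatest.union_pair_max {α : Type*} [LinearOrder α] {S : Set α} {a b c : α}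
    (hS : ∀ s ∈ S, s ≤ a) (ha : a ∈ S ∨ a ≤ b ∨ a ≤ c) :
    IsGreatest (S ∪ {b, c}) (max (max a b) c) := by
  refine ⟨?_, ?_⟩
  · rcases ha with ha | ha
    · rcases max_choice (max a b) c with h | h <;> rw [h]
      · rcases max_choice a b with h' | h' <;> rw [h'] <;> simp [ha]
      · simp
    · have : max a (max b c) = max b c :=
        max_eq_right (ha.elim le_max_of_le_left le_max_of_le_right)
      rw [max_assoc, this]
      exact Or.inr (max_choice b c)
  · rintro v (hv | rfl | rfl)
    · exact (hS v hv).trans ((le_max_left a b).trans (le_max_left _ c))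
    · exact (le_max_right a v).trans (le_max_left _ c)
    · exact le_max_right _ v

section Violation

variable {m n : ℕ} (W : Fin m → Fin n → ℝ) (b : Fin m → ℝ) (l u : Fin n → ℝ)
  (x : Fin n → ℝ) (xout z : Fin m → ℝ) (i : Fin m)

noncomputable def violationSlope (j : Fin n) : ℝ :=
  ((1 - z i) * cLmat W l u i j + z i * cUmat W l u i j - x j) * W i j

theorem violation_eq_violation_zero_add (I : Fin m → Fin n → ℝ) :
    violation W b l u I x xout z i =
      violation W b l u (fun _ _ => 0) x xout z i
        + ∑ j, I i j * violationSlope W l u x z i j := by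
  have slope_sum : ∑ j, I i j * violationSlope W l u x z i j =
      (∑ j, W i j * I i j * cLmat W l u i j) * (1 - z i) + (∑ j, W i j * cUmat W l u i j) * z i
        - (∑ j, W i j * (1 - I i j) * cUmat W l u i j) * z i - ∑ j, W i j * I i j * x j := by
    simp only [violationSlope, sum_mul, ← sum_add_distrib, ← sum_sub_distrib]
    exact sum_congr rfl fun j _ => by ring
  simp only [violation, andersonRHS, mul_zero, zero_mul, sub_zero, mul_one, sum_const_zero]
  linear_combination -slope_sum

theorem violation_zero :
    violation W b l u (fun _ _ => 0) x xout z i =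
      xout i - z i * ((∑ j, W i j * cUmat W l u i j) + b i) := by
  simp only [violation, andersonRHS, mul_zero, zero_mul, sub_zero, mul_one, sum_const_zero]
  ring

theorem violation_one :
    violation W b l u (fun _ _ => 1) x xout z i =
      xout i - ((∑ j, W i j * x j) + b i) + (1 - z i) * ((∑ j, W i j * cLmat W l u i j) + b i) := by
  simp only [violation, andersonRHS, mul_one, sub_self, mul_zero, zero_mul, sum_const_zero]
  ring

theorem violation_congr_row {I J : Fin m → Fin n → ℝ} (h : ∀ j, I i j = J i j) :
    violation W b l u I x xout z i = violation W b l u J x xout z i := by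
  simp only [violation, andersonRHS, h]

theorem violation_le_of_slope_sign {I J : Fin m → Fin n → ℝ} (hI : ∀ j, 0 ≤ I i j ∧ I i j ≤ 1)
    (hJ : ∀ j, J i j = if 0 ≤ violationSlope W l u x z i j then 1 else 0) :
    violation W b l u I x xout z i ≤ violation W b l u J x xout z i := by
  rw [violation_eq_violation_zero_add W b l u x xout z i I,
    violation_eq_violation_zero_add W b l u x xout z i J]
  gcongr 2 with j
  rw [hJ j]
  exact mul_le_ite_nonneg_mul (hI j).1 (hI j).2

theorem violation_zero_le {uhat : ℝ} (hz : 0 ≤ z i)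
    (hM : uhat ≤ (∑ j, W i j * cUmat W l u i j) + b i) :
    violation W b l u (fun _ _ => 0) x xout z i ≤ xout i - uhat * z i := by
  rw [violation_zero]
  linarith [mul_le_mul_of_nonneg_left hM hz]

theorem violation_one_le {lhat : ℝ} (hz : z i ≤ 1)
    (hM : (∑ j, W i j * cLmat W l u i j) + b i ≤ lhat) :
    violation W b l u (fun _ _ => 1) x xout z i ≤
      xout i - ((∑ j, W i j * x j) + b i) + lhat * (1 - z i) := by
  rw [violation_one]
  linarith [mul_le_mul_of_nonneg_left hM (sub_nonneg.mpr hz)]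

end Violation

theorem saddlePoint_conditional_gradient_most_violated_general
    {m n : ℕ} (W : Fin m → Fin n → ℝ) (b : Fin m → ℝ) (l u : Fin n → ℝ)
    (lhat uhat : Fin m → ℝ)
    (x : Fin n → ℝ) (xout z : Fin m → ℝ)
    (hz : ∀ i, 0 ≤ z i ∧ z i ≤ 1)
    (hMminus : ∀ i, (∑ j, W i j * cLmat W l u i j) + b i ≤ lhat i)
    (hMplus : ∀ i, uhat i ≤ (∑ j, W i j * cUmat W l u i j) + b i)
    (Istar : Fin m → Fin n → ℝ)
    (hIstar : ∀ i j, Istar i j =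
      if 0 ≤ ((1 - z i) * cLmat W l u i j + z i * cUmat W l u i j - x j) * W i j
      then 1 else 0) :
    ∀ i : Fin m,
      (∀ I : Fin m → Fin n → ℝ, (∀ i' j, I i' j = 0 ∨ I i' j = 1) →
        violation W b l u I x xout z i ≤ violation W b l u Istar x xout z i) ∧
      (violation W b l u (fun _ _ => 0) x xout z i ≤ xout i - uhat i * z i) ∧
      (violation W b l u (fun _ _ => 1) x xout z i ≤
        xout i - ((∑ j, W i j * x j) + b i) + lhat i * (1 - z i)) ∧
      IsGreatest
        ({v : ℝ | ∃ I : Fin m → Fin n → ℝ, (∀ i' j, I i' j = 0 ∨ I i' j = 1) ∧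
            (¬ ∀ j, I i j = 0) ∧ (¬ ∀ j, I i j = 1) ∧
            v = violation W b l u I x xout z i} ∪
          {xout i - uhat i * z i,
            xout i - ((∑ j, W i j * x j) + b i) + lhat i * (1 - z i)})
        (max (max (violation W b l u Istar x xout z i)
            (xout i - uhat i * z i))
          (xout i - ((∑ j, W i j * x j) + b i) + lhat i * (1 - z i))) := by
  intro i
  have hA : ∀ I : Fin m → Fin n → ℝ, (∀ i' j, I i' j = 0 ∨ I i' j = 1) →
      violation W b l u I x xout z i ≤ violation W b l u Istar x xout z i := fun I hI =>
    violation_le_of_slope_sign W b l u x xout z i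
      (fun j => by rcases hI i j with h | h <;> simp [h]) (hIstar i)
  have h0 := violation_zero_le W b l u x xout z i (hz i).1 (hMplus i)
  have h1 := violation_one_le W b l u x xout z i (hz i).2 (hMminus i)
  refine ⟨hA, h0, h1, IsGreatest.union_pair_max ?_ ?_⟩
  · rintro _ ⟨I, hI, -, -, rfl⟩
    exact hA I hI
  by_cases hall0 : ∀ j, Istar i j = 0
  · exact Or.inr (Or.inl ((violation_congr_row W b l u x xout z i hall0).trans_le h0))
  by_cases hall1 : ∀ j, Istar i j = 1
  · exact Or.inr (Or.inr ((violation_congr_row W b l u x xout z i hall1).trans_le h1))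
  have hIstar_binary : ∀ i' j, Istar i' j = 0 ∨ Istar i' j = 1 := fun i' j => by
    rw [hIstar]
    split_ifs <;> simp
  exact Or.inl ⟨Istar, hIstar_binary, hall0, hall1, rfl⟩

/-- Saddle Point conditional gradient identifies the most violated constraint
of `A_k` (Proposition, Section 5.2): with `z ∈ [0,1]`, `x̂ = Wx + b`, and
pre-activation bounds at least as tight as interval propagation
(`M⁻ ≤ l̂`, `û ≤ M⁺`), for every neuron `i`: (a) the sign-test mask `I*`
maximizes the Anderson violation over all binary masks; (b) the violations of
the all-zero and all-one masks are dominated by the Big-M violations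
`v⁰, v¹`; consequently `max(v_i(I*), v_i⁰, v_i¹)` is the greatest violation
over all upper-bounding constraints of `A_k` at neuron `i`, i.e. the
violations `v_i(I)` over masks whose `i`-th row is neither all-zero nor
all-one, together with `v_i⁰` and `v_i¹`. -/
theorem saddlePoint_conditional_gradient_most_violated
    {m n : ℕ} (W : Fin m → Fin n → ℝ) (b : Fin m → ℝ) (l u : Fin n → ℝ)
    (hlu : ∀ j, l j ≤ u j)
    (lhat uhat : Fin m → ℝ)
    (x : Fin n → ℝ) (xout z : Fin m → ℝ)
    (hz : ∀ i, 0 ≤ z i ∧ z i ≤ 1)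
    (hMminus : ∀ i, (∑ j, W i j * cLmat W l u i j) + b i ≤ lhat i)
    (hMplus : ∀ i, uhat i ≤ (∑ j, W i j * cUmat W l u i j) + b i)
    (Istar : Fin m → Fin n → ℝ)
    (hIstar : ∀ i j, Istar i j =
      if 0 ≤ ((1 - z i) * cLmat W l u i j + z i * cUmat W l u i j - x j) * W i j
      then 1 else 0) :
    ∀ i : Fin m,
      (∀ I : Fin m → Fin n → ℝ, (∀ i' j, I i' j = 0 ∨ I i' j = 1) →
        violation W b l u I x xout z i ≤ violation W b l u Istar x xout z i) ∧
      (violation W b l u (fun _ _ => 0) x xout z i ≤ xout i - uhat i * z i) ∧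
      (violation W b l u (fun _ _ => 1) x xout z i ≤
        xout i - ((∑ j, W i j * x j) + b i) + lhat i * (1 - z i)) ∧
      IsGreatest
        ({v : ℝ | ∃ I : Fin m → Fin n → ℝ, (∀ i' j, I i' j = 0 ∨ I i' j = 1) ∧
            (¬ ∀ j, I i j = 0) ∧ (¬ ∀ j, I i j = 1) ∧
            v = violation W b l u I x xout z i} ∪
          {xout i - uhat i * z i,
            xout i - ((∑ j, W i j * x j) + b i) + lhat i * (1 - z i)})
        (max (max (violation W b l u Istar x xout z i)
            (xout i - uhat i * z i))
          (xout i - ((∑ j, W i j * x j) + b i) + lhat i * (1 - z i))) :=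
  saddlePoint_conditional_gradient_most_violated_general W b l u lhat uhat x xout z hz hMminus
    hMplus Istar hIstar
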